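/- arXiv:2509.02493 — 2 statements merged into one kernel-verified Lean document; each statement's English description precedes it below -/
import Mathlib

section
/- Fix β > 0 with β ≠ 1 and θ ∈ ℝ. Let u^t = βθ/(3β+2), v^t = 2θ/(3β+2), Q = (1−β)/β, and define the incentive policy γ(v) = u^t + Q(v − v^t). Then the agent's cost v ↦ (θ − γ(v) − v)² + v² is a strictly convex quadratic in v whose unique minimizer is v = v^t. -/
/-- Under the affine incentive policy γ(v) = u^t + Q(v − v^t) with
Q = (1−β)/β, the agent's cost is a strictly convex quadratic in v uniquely minimized
at v = v^t. -/
theorem stmt_7 (β θ : ℝ) (hβ : 0 < β) (hβ1 : β ≠ 1)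
    (ut vt Q : ℝ) (hut : ut = β*θ/(3*β + 2)) (hvt : vt = 2*θ/(3*β + 2))
    (hQ : Q = (1 - β)/β)
    (γ : ℝ → ℝ) (hγ : ∀ v, γ v = ut + Q * (v - vt))
    (cA : ℝ → ℝ) (hcA : ∀ v, cA v = (θ - γ v - v)^2 + v^2) :
    (∃ a b c : ℝ, 0 < a ∧ ∀ v, cA v = a*v^2 + b*v + c) ∧
    StrictConvexOn ℝ Set.univ cA ∧
    (∀ v, v ≠ vt → cA vt < cA v) := by
  have hb : β ≠ 0 := ne_of_gt hβ
  have hd : (3*β + 2) ≠ 0 := by nlinarith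
  set a : ℝ := (1+Q)^2 + 1 with ha_def
  have ha : 0 < a := by positivity
  have key : ∀ v, cA v = a * (v - vt)^2 + cA vt := by
    intro v
    rw [hcA, hcA, hγ, hγ, ha_def, hut, hvt, hQ]
    field_simp
    ring
  refine ⟨⟨a, -2*a*vt, a*vt^2 + cA vt, ha, fun v => by rw [key v]; ring⟩, ?_, ?_⟩
  · refine ⟨convex_univ, ?_⟩
    intro x _ y _ hxy p q hp hq hpq
    simp only [smul_eq_mul]
    rw [key x, key y, key (p*x + q*y)]
    have h1 : 0 < p * q := mul_pos hp hq
    have hxy' : x - y ≠ 0 := sub_ne_zero.mpr hxy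
    have h2 : 0 < (x - y)^2 := by positivity
    have hid : p*(a*(x-vt)^2) + q*(a*(y-vt)^2) - a*(p*x+q*y-vt)^2 = a*(p*q)*(x-y)^2 := by
      have hq' : q = 1 - p := by linarith
      rw [hq']; ring
    have hc : p * cA vt + q * cA vt = cA vt := by
      have hq' : q = 1 - p := by linarith
      rw [hq']; ring
    nlinarith [mul_pos (mul_pos ha h1) h2, hid, hc]
  · intro v hv
    rw [key v]
    have : 0 < a * (v - vt)^2 := by
      have : v - vt ≠ 0 := sub_ne_zero.mpr hv
      positivity
    linarith
end

section
/- Fix β > 0 and z₀, σ₀, σ_w with σ₀ > 0, σ_w > 0. In the Bayesian quadratic Gaussian game with affine mean-feedback policy γ(v) = (β²z₀ − (β−1)(v(3β+2) − 2z₀))/(β(3β+2)) and agent best response v⋆(θ) = (β(3β+2)θ − (β²+2β−2)z₀)/((β²+1)(3β+2)), if θ ∼ N(z₀, σ₀²), then the agent's expected cost E[(θ − γ(v⋆(θ)) − v⋆(θ))² + v⋆(θ)²] equals (4(β²+1)/(9β²+12β+4)) z₀² + (β²/(β²+1)) σ₀². -/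
open MeasureTheory ProbabilityTheory Real Filter
open scoped NNReal ENNReal

lemma aux_integral_sq_mul_exp {b : ℝ} (hb : 0 < b) :
    ∫ x : ℝ, x ^ 2 * Real.exp (-b * x ^ 2) = (2 * b)⁻¹ * Real.sqrt (π / b) := by
  have hb2 : (2 * b) ≠ 0 := by positivity
  have hu : ∀ x : ℝ, HasDerivAt (fun x : ℝ => x) (1 : ℝ) x := fun x => hasDerivAt_id x
  have hv : ∀ x : ℝ, HasDerivAt (fun x : ℝ => -(2 * b)⁻¹ * Real.exp (-b * x ^ 2))
      (x * Real.exp (-b * x ^ 2)) x := by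
    intro x
    have h1 : HasDerivAt (fun x : ℝ => -b * x ^ 2) (-b * (2 * x)) x := by
      simpa using ((hasDerivAt_pow 2 x).const_mul (-b))
    have h2 := (h1.exp).const_mul (-(2 * b)⁻¹)
    refine h2.congr_deriv ?_
    field_simp
  have hint2 : Integrable (fun x : ℝ => x ^ 2 * Real.exp (-b * x ^ 2)) := by
    have := integrable_rpow_mul_exp_neg_mul_sq hb (s := 2) (by norm_num)
    refine this.congr (Filter.Eventually.of_forall fun x => ?_)
    show x ^ (2 : ℝ) * Real.exp (-b * x ^ 2) = x ^ 2 * Real.exp (-b * x ^ 2)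
    rw [show (2 : ℝ) = ((2 : ℕ) : ℝ) by norm_num, Real.rpow_natCast]
  have huv' : Integrable ((fun x : ℝ => x) * (fun x : ℝ => x * Real.exp (-b * x ^ 2))) := by
    refine hint2.congr (Filter.Eventually.of_forall fun x => ?_)
    simp [Pi.mul_apply]; ring
  have hu'v : Integrable ((fun _ : ℝ => (1 : ℝ)) *
      (fun x : ℝ => -(2 * b)⁻¹ * Real.exp (-b * x ^ 2))) := by
    refine ((integrable_exp_neg_mul_sq hb).const_mul (-(2 * b)⁻¹)).congr (Filter.Eventually.of_forall fun x => ?_)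
    simp [Pi.mul_apply]
  have huv : Integrable ((fun x : ℝ => x) *
      (fun x : ℝ => -(2 * b)⁻¹ * Real.exp (-b * x ^ 2))) := by
    refine ((integrable_mul_exp_neg_mul_sq hb).const_mul (-(2 * b)⁻¹)).congr (Filter.Eventually.of_forall fun x => ?_)
    simp [Pi.mul_apply]; ring
  have key := integral_mul_deriv_eq_deriv_mul_of_integrable (fun x _ => hu x) (fun x _ => hv x) huv' hu'v huv
  have h1 : ∫ x : ℝ, x * (x * Real.exp (-b * x ^ 2)) = ∫ x : ℝ, x ^ 2 * Real.exp (-b * x ^ 2) := by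
    congr 1; funext x; ring
  have h2 : ∫ x : ℝ, (1 : ℝ) * (-(2 * b)⁻¹ * Real.exp (-b * x ^ 2))
      = -(2 * b)⁻¹ * Real.sqrt (π / b) := by
    simp_rw [one_mul]
    rw [integral_const_mul, integral_gaussian]
  rw [h1, h2] at key
  rw [key]; ring

lemma aux_integral_id_mul_exp {b : ℝ} (hb : 0 < b) :
    ∫ x : ℝ, x * Real.exp (-b * x ^ 2) = 0 := by
  have h := integral_neg_eq_self (fun x : ℝ => x * Real.exp (-b * x ^ 2)) volume
  simp only [neg_sq, neg_mul] at h ⊢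
  rw [integral_neg] at h
  linarith [h]

lemma aux_gaussian_quad (m : ℝ) (v : ℝ≥0) (hv : v ≠ 0) (A B C : ℝ) :
    ∫ x, (A * (x - m) ^ 2 + B * (x - m) + C) ∂(gaussianReal m v)
      = A * (v : ℝ) + C := by
  have hvpos : (0 : ℝ) < (v : ℝ) := NNReal.coe_pos.mpr (pos_iff_ne_zero.mpr hv)
  set b : ℝ := (2 * (v : ℝ))⁻¹ with hbdef
  have hbpos : 0 < b := by positivity
  set c : ℝ := (Real.sqrt (2 * π * (v : ℝ)))⁻¹ with hcdef
  rw [gaussianReal_of_var_ne_zero m hv]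
  have hdens : gaussianPDF m v = fun x => ((Real.toNNReal (gaussianPDFReal m v x) : ℝ≥0) : ℝ≥0∞) := rfl
  rw [hdens, integral_withDensity_eq_integral_smul
    ((measurable_gaussianPDFReal m v).real_toNNReal) _]
  have hsm : ∀ x : ℝ, (Real.toNNReal (gaussianPDFReal m v x) : ℝ≥0)
        • (A * (x - m) ^ 2 + B * (x - m) + C)
      = gaussianPDFReal m v x * (A * (x - m) ^ 2 + B * (x - m) + C) := by
    intro x
    rw [NNReal.smul_def, Real.coe_toNNReal _ (gaussianPDFReal_nonneg m v x)]
    rfl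
  simp_rw [hsm]
  rw [← integral_add_right_eq_self
    (fun x => gaussianPDFReal m v x * (A * (x - m) ^ 2 + B * (x - m) + C)) m]
  have hpdf : ∀ x : ℝ, gaussianPDFReal m v (x + m) = c * Real.exp (-b * x ^ 2) := by
    intro x
    have harg : -(x + m - m) ^ 2 / (2 * (v : ℝ)) = -(2 * (v : ℝ))⁻¹ * x ^ 2 := by ring
    rw [hcdef, hbdef]
    simp only [gaussianPDFReal, harg]
  have hcongr : ∀ x : ℝ, gaussianPDFReal m v (x + m) * (A * (x + m - m) ^ 2 + B * (x + m - m) + C)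
      = A * c * (x ^ 2 * Real.exp (-b * x ^ 2)) + (B * c * (x * Real.exp (-b * x ^ 2))
        + C * c * Real.exp (-b * x ^ 2)) := by
    intro x
    rw [hpdf]
    ring_nf
  simp_rw [hcongr]
  have I2 : Integrable (fun x : ℝ => x ^ 2 * Real.exp (-b * x ^ 2)) := by
    have := integrable_rpow_mul_exp_neg_mul_sq hbpos (s := 2) (by norm_num)
    refine this.congr (Filter.Eventually.of_forall fun x => ?_)
    show x ^ (2 : ℝ) * Real.exp (-b * x ^ 2) = x ^ 2 * Real.exp (-b * x ^ 2)
    rw [show (2 : ℝ) = ((2 : ℕ) : ℝ) by norm_num, Real.rpow_natCast]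
  have I1 : Integrable (fun x : ℝ => x * Real.exp (-b * x ^ 2)) :=
    integrable_mul_exp_neg_mul_sq hbpos
  have I0 : Integrable (fun x : ℝ => Real.exp (-b * x ^ 2)) :=
    integrable_exp_neg_mul_sq hbpos
  have IA : Integrable (fun x : ℝ => A * c * (x ^ 2 * Real.exp (-b * x ^ 2))) :=
    I2.const_mul _
  have IB : Integrable (fun x : ℝ => B * c * (x * Real.exp (-b * x ^ 2))) :=
    I1.const_mul _
  have IC : Integrable (fun x : ℝ => C * c * Real.exp (-b * x ^ 2)) :=
    I0.const_mul _
  have IBC : Integrable (fun x : ℝ => B * c * (x * Real.exp (-b * x ^ 2))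
      + C * c * Real.exp (-b * x ^ 2)) := IB.add IC
  rw [integral_add IA IBC, integral_add IB IC,
    integral_const_mul, integral_const_mul, integral_const_mul,
    aux_integral_sq_mul_exp hbpos, aux_integral_id_mul_exp hbpos, integral_gaussian]
  -- now pure algebra
  have h1 : (2 * b)⁻¹ = (v : ℝ) := by
    rw [hbdef]; field_simp
  have hsq : Real.sqrt (π / b) = Real.sqrt (2 * π * (v : ℝ)) := by
    congr 1
    rw [hbdef]; field_simp
  have hcs : c * Real.sqrt (2 * π * (v : ℝ)) = 1 := by
    rw [hcdef]
    have : Real.sqrt (2 * π * (v : ℝ)) ≠ 0 := by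
      refine ne_of_gt (Real.sqrt_pos.mpr (by positivity))
    field_simp
  rw [h1, hsq]
  have expand : A * c * ((v : ℝ) * Real.sqrt (2 * π * (v : ℝ)))
      + (B * c * 0 + C * c * Real.sqrt (2 * π * (v : ℝ)))
      = A * (v : ℝ) * (c * Real.sqrt (2 * π * (v : ℝ)))
        + C * (c * Real.sqrt (2 * π * (v : ℝ))) := by ring
  rw [expand, hcs]
  ring

/-- The agent's expected equilibrium cost in the Bayesian quadratic
Gaussian game 𝔊₂ with affine mean-feedback policy equals
(4(β²+1)/(9β²+12β+4)) z₀² + (β²/(β²+1)) σ₀². -/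
theorem stmt_16 (β z₀ σ₀ σw : ℝ) (hβ : 0 < β) (hσ₀ : 0 < σ₀) (hσw : 0 < σw)
    (γ : ℝ → ℝ)
    (hγ : ∀ v, γ v = (β^2*z₀ - (β - 1)*(v*(3*β + 2) - 2*z₀)) / (β*(3*β + 2)))
    (vstar : ℝ → ℝ)
    (hvstar : ∀ θ, vstar θ
      = (β*(3*β + 2)*θ - (β^2 + 2*β - 2)*z₀) / ((β^2 + 1)*(3*β + 2))) :
    ∫ θ, ((θ - γ (vstar θ) - vstar θ)^2 + (vstar θ)^2)
        ∂(gaussianReal z₀ (Real.toNNReal (σ₀^2)))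
      = (4*(β^2 + 1)/(9*β^2 + 12*β + 4)) * z₀^2 + (β^2/(β^2 + 1)) * σ₀^2 := by
  have hβ0 : β ≠ 0 := ne_of_gt hβ
  have h32 : (3 * β + 2) ≠ 0 := by positivity
  have hβ1 : (β ^ 2 + 1) ≠ 0 := by positivity
  set A : ℝ := β ^ 2 / (β ^ 2 + 1) with hA
  set B : ℝ := 4 * β * z₀ / (3 * β + 2) with hB
  set C : ℝ := 4 * (β ^ 2 + 1) * z₀ ^ 2 / (3 * β + 2) ^ 2 with hC
  have hpt : ∀ θ : ℝ, ((θ - γ (vstar θ) - vstar θ)^2 + (vstar θ)^2)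
      = A * (θ - z₀) ^ 2 + B * (θ - z₀) + C := by
    intro θ
    rw [hγ, hvstar, hA, hB, hC]
    field_simp
    ring
  simp_rw [hpt]
  have hv : Real.toNNReal (σ₀ ^ 2) ≠ 0 := by
    simp [Real.toNNReal_eq_zero, not_le]
    positivity
  rw [aux_gaussian_quad z₀ _ hv A B C]
  have hco : ((Real.toNNReal (σ₀ ^ 2) : ℝ≥0) : ℝ) = σ₀ ^ 2 :=
    Real.coe_toNNReal _ (sq_nonneg σ₀)
  rw [hco, hA, hC]
  have h94 : (9 * β ^ 2 + 12 * β + 4) = (3 * β + 2) ^ 2 := by ring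
  rw [h94]
  field_simp
  ring
end
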